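/- For every x ∈ ℝ one has Q₀(x) := ψ(x)·ψ''(x) − (ψ'(x))² > 0. -/

import Mathlib

/-!
Up to the positive factor `1 / Γ(ρ/k)`, `ψ(x)` is the moment
`M p b = ∫₀^∞ t^p exp(-t²/2 + b t) dt` with `p = ρ/k - 1`, `b = s (x - μ)` and
`s = √(2k)/σ`.
Differentiating under the integral sign raises `p` by one and brings out a factor `s`, so
`Q₀(x) = (s / Γ(ρ/k))² (M p b · M (p + 2) b - M (p + 1) b ²)`. The bracket is positive by the
strict Cauchy–Schwarz inequality for the density `t^p exp(-t²/2 + b t)` on `(0, ∞)`: the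
variance of `t` under it is positive since the density is not concentrated at a point.
-/

noncomputable section

open MeasureTheory

/-- The increasing fundamental solution `ψ` of the Ornstein–Uhlenbeck resolvent equation:
`ψ(x) = (1/Γ(ρ/k)) ∫₀^∞ t^{ρ/k − 1} exp(−t²/2 + ((x − μ)√(2k)/σ) t) dt`. -/
def psi (ρ k σ μ : ℝ) (x : ℝ) : ℝ :=
  (1 / Real.Gamma (ρ / k)) *
    ∫ t in Set.Ioi (0 : ℝ),
      t ^ (ρ / k - 1) * Real.exp (-t ^ 2 / 2 + ((x - μ) * Real.sqrt (2 * k) / σ) * t)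

open Set Real

lemma integral_pos_of_ae_pos {α : Type*} [MeasurableSpace α] {μ : Measure α} {f : α → ℝ}
    (hμ : μ ≠ 0) (hf : ∀ᵐ x ∂μ, 0 < f x) (hfi : Integrable f μ) : 0 < ∫ x, f x ∂μ := by
  rw [integral_pos_iff_support_of_nonneg_ae (hf.mono fun _ hx ↦ hx.le) hfi, pos_iff_ne_zero]
  intro hsupp
  have hzero : ∀ᵐ x ∂μ, f x = 0 := by
    simpa [Function.support] using measure_eq_zero_iff_ae_notMem.mp hsupp
  have hfalse : ∀ᵐ _ ∂μ, False := (hf.and hzero).mono fun _ hx ↦ hx.1.ne' hx.2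
  exact hμ (ae_eq_bot.mp (Filter.eventually_false_iff_eq_bot.mp hfalse))

theorem sq_integral_mul_lt_integral_mul_integral {μ : Measure ℝ} [NullSingletonClass μ]
    (hμ : μ ≠ 0) {w : ℝ → ℝ} (hw : ∀ᵐ t ∂μ, 0 < w t) (h0 : Integrable w μ)
    (h1 : Integrable (fun t ↦ t * w t) μ) (h2 : Integrable (fun t ↦ t ^ 2 * w t) μ) :
    (∫ t, t * w t ∂μ) ^ 2 < (∫ t, w t ∂μ) * ∫ t, t ^ 2 * w t ∂μ := by
  set A := ∫ t, w t ∂μ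
  set B := ∫ t, t * w t ∂μ
  set C := ∫ t, t ^ 2 * w t ∂μ
  have hA : 0 < A := integral_pos_of_ae_pos hμ hw h0
  -- the variance about the mean `l` is `C - B² / A`
  set l := B / A
  have hpoint : (fun t ↦ (t - l) ^ 2 * w t) =
      fun t ↦ t ^ 2 * w t - 2 * l * (t * w t) + l ^ 2 * w t := by
    ext t; ring
  have h21 : Integrable (fun t ↦ t ^ 2 * w t - 2 * l * (t * w t)) μ := h2.sub (h1.const_mul _)
  have hvar : 0 < ∫ t, (t - l) ^ 2 * w t ∂μ := by
    refine integral_pos_of_ae_pos hμ ?_ (hpoint ▸ h21.add (h0.const_mul _))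
    filter_upwards [hw, Measure.ae_ne μ l] with t hwt hne
    have : t - l ≠ 0 := sub_ne_zero.mpr hne
    positivity
  rw [hpoint, integral_add h21 (h0.const_mul _), integral_sub h2 (h1.const_mul _),
    integral_const_mul, integral_const_mul] at hvar
  have hlA : l * A = B := div_mul_cancel₀ B hA.ne'
  nlinarith

def gaussMoment (p b : ℝ) : ℝ :=
  ∫ t in Ioi (0 : ℝ), t ^ p * exp (-t ^ 2 / 2 + b * t)

namespace gaussMoment

lemma integrableOn {p : ℝ} (hp : -1 < p) (b : ℝ) :
    IntegrableOn (fun t : ℝ ↦ t ^ p * exp (-t ^ 2 / 2 + b * t)) (Ioi 0) := by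
  refine ((integrableOn_rpow_mul_exp_neg_mul_sq (by norm_num : (0 : ℝ) < 1 / 4) hp).const_mul
    (exp (b ^ 2))).mono' (by fun_prop) ?_
  filter_upwards [ae_restrict_mem measurableSet_Ioi] with t (ht : 0 < t)
  -- completing the square: `-t²/2 + b t ≤ b² - t²/4`
  have hexp : -t ^ 2 / 2 + b * t ≤ b ^ 2 + -(1 / 4) * t ^ 2 := by
    nlinarith [sq_nonneg (b - t / 2)]
  rw [norm_of_nonneg (by positivity), mul_left_comm, ← exp_add]
  gcongr

theorem hasDerivAt {p : ℝ} (hp : -1 < p) (b : ℝ) :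
    HasDerivAt (gaussMoment p) (gaussMoment (p + 1) b) b := by
  have key := hasDerivAt_integral_of_dominated_loc_of_deriv_le
    (μ := volume.restrict (Ioi (0 : ℝ)))
    (F := fun y t ↦ t ^ p * exp (-t ^ 2 / 2 + y * t))
    (F' := fun y t ↦ t ^ (p + 1) * exp (-t ^ 2 / 2 + y * t))
    (bound := fun t ↦ t ^ (p + 1) * exp (-t ^ 2 / 2 + (b + 1) * t))
    (Metric.ball_mem_nhds b one_pos) (.of_forall fun y ↦ (integrableOn hp y).1)
    (integrableOn hp b) (integrableOn (by linarith) b).1 ?_ (integrableOn (by linarith) (b + 1))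
    ?_
  · exact key.2
  · filter_upwards [ae_restrict_mem measurableSet_Ioi] with t (ht : 0 < t) y hy
    rw [Metric.mem_ball, Real.dist_eq, abs_sub_lt_iff] at hy
    have hyb : y ≤ b + 1 := by linarith [hy.1]
    rw [norm_of_nonneg (by positivity)]
    gcongr
  · filter_upwards [ae_restrict_mem measurableSet_Ioi] with t (ht : 0 < t) y _
    have hexp : HasDerivAt (fun y ↦ exp (-t ^ 2 / 2 + y * t)) (exp (-t ^ 2 / 2 + y * t) * t) y :=
      (((hasDerivAt_id y).mul_const t).const_add _).exp.congr_deriv (by simp)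
    refine (hexp.const_mul (t ^ p)).congr_deriv ?_
    rw [rpow_add_one ht.ne']
    ring

theorem deriv_comp_affine {p : ℝ} (hp : -1 < p) (s c : ℝ) :
    deriv (fun y ↦ gaussMoment p (s * (y - c))) =
      fun y ↦ s * gaussMoment (p + 1) (s * (y - c)) := by
  ext y
  have hlin : HasDerivAt (fun y ↦ s * (y - c)) s y := by
    simpa using ((hasDerivAt_id y).sub_const c).const_mul s
  exact ((hasDerivAt hp _).comp y hlin).deriv.trans (mul_comm _ _)

theorem sq_lt_mul {p : ℝ} (hp : 0 < p) (b : ℝ) :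
    gaussMoment p b ^ 2 < gaussMoment (p - 1) b * gaussMoment (p + 1) b := by
  set w : ℝ → ℝ := fun t ↦ t ^ (p - 1) * exp (-t ^ 2 / 2 + b * t)
  have hmul : ∀ t ∈ Ioi (0 : ℝ), t * w t = t ^ p * exp (-t ^ 2 / 2 + b * t) := by
    intro t (ht : 0 < t)
    rw [← mul_assoc, mul_comm t, ← rpow_add_one ht.ne', sub_add_cancel]
  have hmul2 : ∀ t ∈ Ioi (0 : ℝ), t ^ 2 * w t = t ^ (p + 1) * exp (-t ^ 2 / 2 + b * t) := by
    intro t (ht : 0 < t)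
    rw [show t ^ 2 * w t = t * (t * w t) by ring, hmul t ht, ← mul_assoc, mul_comm t,
      ← rpow_add_one ht.ne']
  have h0 : IntegrableOn w (Ioi 0) := integrableOn (by linarith) b
  have h1 := (integrableOn (p := p) (by linarith) b).congr_fun (fun t ht ↦ (hmul t ht).symm)
    measurableSet_Ioi
  have h2 := (integrableOn (p := p + 1) (by linarith) b).congr_fun
    (fun t ht ↦ (hmul2 t ht).symm) measurableSet_Ioi
  have hw : ∀ᵐ t ∂volume.restrict (Ioi (0 : ℝ)), 0 < w t := by
    filter_upwards [ae_restrict_mem measurableSet_Ioi] with t (ht : 0 < t)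
    positivity
  have hvol : volume.restrict (Ioi (0 : ℝ)) ≠ 0 := by simp
  have := sq_integral_mul_lt_integral_mul_integral hvol hw h0 h1 h2
  rwa [setIntegral_congr_fun measurableSet_Ioi hmul,
    setIntegral_congr_fun measurableSet_Ioi hmul2] at this

end gaussMoment

theorem psi_eq_gaussMoment (ρ k σ μ : ℝ) :
    psi ρ k σ μ = fun y ↦
      1 / Gamma (ρ / k) * gaussMoment (ρ / k - 1) (sqrt (2 * k) / σ * (y - μ)) := by
  ext y
  simp only [psi, gaussMoment]
  congr 3 with t
  ring_nf

/-- For every `x ∈ ℝ`, `Q₀(x) := ψ(x)ψ''(x) − (ψ'(x))² > 0`. -/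
theorem stmt10 (ρ k σ μ : ℝ) (hρ : 0 < ρ) (hk : 0 < k) (hσ : 0 < σ) (x : ℝ) :
    0 < psi ρ k σ μ x * deriv (deriv (psi ρ k σ μ)) x - (deriv (psi ρ k σ μ) x) ^ 2 := by
  have hψ := psi_eq_gaussMoment ρ k σ μ
  set a := ρ / k
  set s := sqrt (2 * k) / σ
  set c := 1 / Gamma a
  have ha : 0 < a := div_pos hρ hk
  have hs : s ≠ 0 := (div_pos (sqrt_pos.mpr (by linarith)) hσ).ne'
  have hc : c ≠ 0 := one_div_ne_zero (Gamma_pos_of_pos ha).ne'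
  have hψ' : deriv (psi ρ k σ μ) = fun y ↦ c * (s * gaussMoment a (s * (y - μ))) := by
    rw [hψ, deriv_const_mul_field', gaussMoment.deriv_comp_affine (by linarith), sub_add_cancel]
  have hψ'' : deriv (deriv (psi ρ k σ μ)) =
      fun y ↦ c * (s * (s * gaussMoment (a + 1) (s * (y - μ)))) := by
    rw [hψ', deriv_const_mul_field', deriv_const_mul_field',
      gaussMoment.deriv_comp_affine (by linarith)]
  have hlogconvex := gaussMoment.sq_lt_mul ha (s * (x - μ))
  rw [hψ'', hψ', hψ]
  have : 0 < (c * s) ^ 2 := by positivity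
  nlinarith

end
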